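/- Strength relation theorem: for every STL-U formula φ (built from atomic predicates, negation, conjunction, bounded always, bounded eventually, and bounded until), if a flowpipe ω strongly satisfies φ at time t, then ω weakly satisfies φ at time t; equivalently, if ω does not weakly satisfy φ at time t, then ω does not strongly satisfy φ at time t. -/
import Mathlib


/-- STL-U formulas: atomic predicates, negation, conjunction, bounded always,
bounded eventually, and bounded until (time windows are sets of offsets). -/
inductive Formula where
  | atom : (ℝ → ℝ) → Formula
  | neg : Formula → Formula
  | conj : Formula → Formula → Formula
  | always : Set ℕ → Formula → Formula
  | ev : Set ℕ → Formula → Formula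
  | untl : Set ℕ → Formula → Formula → Formula

mutual
/-- Strong satisfaction of an STL-U formula by a flowpipe `ω : ℕ → Set ℝ`. -/
def sSat (ω : ℕ → Set ℝ) : Formula → ℕ → Prop
  | .atom f, t => ∀ x ∈ ω t, f x > 0
  | .neg φ, t => ¬ wSat ω φ t
  | .conj φ₁ φ₂, t => sSat ω φ₁ t ∧ sSat ω φ₂ t
  | .always J φ, t => ∀ d ∈ J, sSat ω φ (t + d)
  | .ev J φ, t => ∃ d ∈ J, sSat ω φ (t + d)
  | .untl J φ₁ φ₂, t =>
      ∃ d ∈ J, sSat ω φ₂ (t + d) ∧ ∀ t'', t < t'' → t'' < t + d → sSat ω φ₁ t''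

/-- Weak satisfaction of an STL-U formula by a flowpipe `ω : ℕ → Set ℝ`. -/
def wSat (ω : ℕ → Set ℝ) : Formula → ℕ → Prop
  | .atom f, t => ∃ x ∈ ω t, f x > 0
  | .neg φ, t => ¬ sSat ω φ t
  | .conj φ₁ φ₂, t => wSat ω φ₁ t ∧ wSat ω φ₂ t
  | .always J φ, t => ∀ d ∈ J, wSat ω φ (t + d)
  | .ev J φ, t => ∃ d ∈ J, wSat ω φ (t + d)
  | .untl J φ₁ φ₂, t =>
      ∃ d ∈ J, wSat ω φ₂ (t + d) ∧ ∀ t'', t < t'' → t'' < t + d → wSat ω φ₁ t''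
end

/-- Strength relation theorem: for a flowpipe assigning a nonempty closed interval to each
time, strong satisfaction of any STL-U formula implies weak satisfaction, and equivalently
failure of weak satisfaction implies failure of strong satisfaction. -/
theorem strength_relation (ω : ℕ → Set ℝ)
    (hflow : ∀ t : ℕ, ∃ lo hi : ℝ, lo ≤ hi ∧ ω t = Set.Icc lo hi) :
    ∀ (φ : Formula) (t : ℕ),
      (sSat ω φ t → wSat ω φ t) ∧ (¬ wSat ω φ t → ¬ sSat ω φ t) := by
  intro φ
  induction φ with
  | atom f =>
    intro t
    constructor
    · intro h
      obtain ⟨lo, hi, hle, heq⟩ := hflow t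
      exact ⟨lo, by rw [heq]; exact ⟨le_refl _, hle⟩, h lo (by rw [heq]; exact ⟨le_refl _, hle⟩)⟩
    · intro hw hs
      exact hw ((by
        obtain ⟨lo, hi, hle, heq⟩ := hflow t
        exact ⟨lo, by rw [heq]; exact ⟨le_refl _, hle⟩, hs lo (by rw [heq]; exact ⟨le_refl _, hle⟩)⟩ : wSat ω (.atom f) t))
  | neg φ ih =>
    intro t
    constructor
    · intro h hs
      exact (h : ¬ wSat ω φ t) ((ih t).1 hs)
    · intro hw
      simp only [wSat, not_not] at hw
      intro hs
      exact (hs : ¬ wSat ω φ t) ((ih t).1 hw)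
  | conj φ₁ φ₂ ih₁ ih₂ =>
    intro t
    constructor
    · rintro ⟨h1, h2⟩
      exact ⟨(ih₁ t).1 h1, (ih₂ t).1 h2⟩
    · rintro hw ⟨h1, h2⟩
      exact hw ⟨(ih₁ t).1 h1, (ih₂ t).1 h2⟩
  | always J φ ih =>
    intro t
    constructor
    · intro h d hd
      exact (ih (t + d)).1 (h d hd)
    · intro hw hs
      exact hw (fun d hd => (ih (t + d)).1 (hs d hd))
  | ev J φ ih =>
    intro t
    constructor
    · rintro ⟨d, hd, h⟩
      exact ⟨d, hd, (ih (t + d)).1 h⟩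
    · rintro hw ⟨d, hd, h⟩
      exact hw ⟨d, hd, (ih (t + d)).1 h⟩
  | untl J φ₁ φ₂ ih₁ ih₂ =>
    intro t
    constructor
    · rintro ⟨d, hd, h2, h1⟩
      exact ⟨d, hd, (ih₂ (t + d)).1 h2, fun t'' ha hb => (ih₁ t'').1 (h1 t'' ha hb)⟩
    · rintro hw ⟨d, hd, h2, h1⟩
      exact hw ⟨d, hd, (ih₂ (t + d)).1 h2, fun t'' ha hb => (ih₁ t'').1 (h1 t'' ha hb)⟩
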